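/- arXiv:0905.0370 — 2 statements merged into one kernel-verified Lean document; each statement's English description precedes it below -/
import Mathlib

section
/- There exist δ* > 0 and a function Γ ∈ C^∞([0, δ*] × ℝ; ℝ²), written Γ = Γ(s,t), with Γ(s, t + 2π) = Γ(s,t) for all (s,t), such that |∂_t Γ(s,t) + e₁|² = 1 + s² for all (s,t) ∈ [0,δ*] × ℝ, and such that for every integer k ≥ 0 there is a constant C_k with |∂_s ∂_t^k Γ₁(s,t)| + |∂_t^k Γ(s,t)| ≤ C_k s for all (s,t) ∈ [0,δ*] × ℝ, where Γ₁ denotes the first component of Γ. -/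
open Set Real

noncomputable section

namespace Corrugation

def rr (s : ℝ) : ℝ := Real.sqrt (1 + s ^ 2)
def dd (s : ℝ) : ℝ := (rr s + 1) * (3 * rr s + 1)
def mm (s : ℝ) : ℝ := s ^ 2 / dd s
def cc (s : ℝ) : ℝ := s / Real.sqrt (dd s)
def KK (s : ℝ) : ℝ := 2 * (1 - mm s) / (1 + mm s)
def G1 (s t : ℝ) : ℝ :=
  rr s * KK s * Real.arctan (mm s * Real.sin (2 * t) / (1 - mm s * Real.cos (2 * t)))
def G2 (s t : ℝ) : ℝ :=
  rr s * KK s / 2 *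
    (Real.log (1 - 2 * cc s * Real.cos t + mm s) - Real.log (1 + 2 * cc s * Real.cos t + mm s))
def Gam (s t : ℝ) : ℝ × ℝ := (G1 s t, G2 s t)

lemma rr_sq (s : ℝ) : rr s ^ 2 = 1 + s ^ 2 := Real.sq_sqrt (by positivity)

lemma rr_ge_one (s : ℝ) : 1 ≤ rr s := by
  rw [rr, Real.one_le_sqrt]
  nlinarith

lemma rr_pos (s : ℝ) : 0 < rr s := lt_of_lt_of_le one_pos (rr_ge_one s)

lemma dd_pos (s : ℝ) : 0 < dd s := by
  have := rr_ge_one s; unfold dd; nlinarith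

lemma mm_nonneg (s : ℝ) : 0 ≤ mm s := by
  exact div_nonneg (sq_nonneg s) (dd_pos s).le

lemma mm_lt_one (s : ℝ) : mm s < 1 := by
  unfold mm
  rw [div_lt_one (dd_pos s)]
  have h1 := rr_ge_one s
  have h2 := rr_sq s
  unfold dd; nlinarith

lemma cc_sq (s : ℝ) : cc s ^ 2 = mm s := by
  unfold cc mm
  rw [div_pow, Real.sq_sqrt (dd_pos s).le]

lemma one_add_mm_pos (s : ℝ) : 0 < 1 + mm s := by have := mm_nonneg s; linarith
lemma one_sub_mm_pos (s : ℝ) : 0 < 1 - mm s := by have := mm_lt_one s; linarith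

lemma one_sub_three_mm_pos (s : ℝ) : 0 < 1 - 3 * mm s := by
  have h1 := rr_ge_one s
  have h2 := rr_sq s
  have h3 := dd_pos s
  have : mm s * (3 * rr s + 1) = rr s - 1 := by
    unfold mm
    rw [div_mul_eq_mul_div, div_eq_iff h3.ne']
    unfold dd; nlinarith
  nlinarith [mm_nonneg s]

/-- the key algebraic relation `r (1 - 3m) = 1 + m`. -/
lemma key_rel (s : ℝ) : rr s * (1 - 3 * mm s) = 1 + mm s := by
  have h2 := rr_sq s
  have h3 := dd_pos s
  have h4 : mm s * dd s = s ^ 2 := by unfold mm; field_simp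
  have h1 := rr_ge_one s
  have hd : dd s = 3 * rr s ^ 2 + 4 * rr s + 1 := by unfold dd; ring
  nlinarith [h4]

lemma KK_mul (s : ℝ) : KK s * (1 + mm s) = 2 * (1 - mm s) := by
  unfold KK
  rw [div_mul_cancel₀ _ (one_add_mm_pos s).ne']

lemma abs_cc_lt_one (s : ℝ) : cc s ^ 2 < 1 := by
  rw [cc_sq]; exact mm_lt_one s

lemma P_pos (s t : ℝ) : 0 < 1 - 2 * cc s * Real.cos t + mm s := by
  have h1 := abs_cc_lt_one s
  have h2 := Real.cos_sq_le_one t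
  have h3 : cc s * Real.cos t < 1 := by nlinarith [sq_nonneg (cc s * Real.cos t)]
  have h4 := cc_sq s
  nlinarith [sq_nonneg (1 - cc s * Real.cos t), sq_nonneg (cc s), mul_le_one₀ h1.le (sq_nonneg (Real.cos t)) h2]
  
lemma Q_pos (s t : ℝ) : 0 < 1 + 2 * cc s * Real.cos t + mm s := by
  have h1 := abs_cc_lt_one s
  have h2 := Real.cos_sq_le_one t
  have h3 : -(1:ℝ) < cc s * Real.cos t := by nlinarith [sq_nonneg (cc s * Real.cos t)]
  have h4 := cc_sq s
  nlinarith [sq_nonneg (1 + cc s * Real.cos t)]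

lemma N_pos (s t : ℝ) : 0 < 1 - mm s * Real.cos (2 * t) := by
  have h1 := mm_lt_one s
  have h0 := mm_nonneg s
  have h2 := Real.cos_le_one (2 * t)
  have h3 := Real.neg_one_le_cos (2 * t)
  nlinarith

lemma E_pos (s t : ℝ) : 0 < 1 - 2 * mm s * Real.cos (2 * t) + mm s ^ 2 := by
  have h1 := mm_lt_one s
  have h0 := mm_nonneg s
  have h2 := Real.cos_le_one (2 * t)
  have h3 := Real.neg_one_le_cos (2 * t)
  nlinarith [sq_nonneg (1 - mm s), sq_nonneg (1 + mm s), sq_nonneg (mm s - Real.cos (2*t))]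


lemma contDiff_rr : ContDiff ℝ (⊤ : ℕ∞) rr := by
  rw [contDiff_iff_contDiffAt]
  intro x
  exact (Real.contDiffAt_sqrt (by positivity)).comp x
    ((contDiff_const.add (contDiff_id.pow 2)).contDiffAt)

lemma contDiff_dd : ContDiff ℝ (⊤ : ℕ∞) dd :=
  (contDiff_rr.add contDiff_const).mul ((contDiff_const.mul contDiff_rr).add contDiff_const)

lemma contDiff_sqrt_dd : ContDiff ℝ (⊤ : ℕ∞) (fun s => Real.sqrt (dd s)) := by
  rw [contDiff_iff_contDiffAt]
  intro x
  exact (Real.contDiffAt_sqrt (dd_pos x).ne').comp x contDiff_dd.contDiffAt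

lemma contDiff_mm : ContDiff ℝ (⊤ : ℕ∞) mm :=
  (contDiff_id.pow 2).div contDiff_dd fun x => (dd_pos x).ne'

lemma contDiff_cc : ContDiff ℝ (⊤ : ℕ∞) cc :=
  contDiff_id.div contDiff_sqrt_dd fun x => (Real.sqrt_pos.2 (dd_pos x)).ne'

lemma contDiff_KK : ContDiff ℝ (⊤ : ℕ∞) KK :=
  (contDiff_const.mul (contDiff_const.sub contDiff_mm)).div
    (contDiff_const.add contDiff_mm) fun x => (one_add_mm_pos x).ne'

lemma contDiff_G1 : ContDiff ℝ (⊤ : ℕ∞) (Function.uncurry G1) := by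
  have hnum : ContDiff ℝ (⊤ : ℕ∞) (fun p : ℝ × ℝ => mm p.1 * Real.sin (2 * p.2)) :=
    (contDiff_mm.comp contDiff_fst).mul
      (Real.contDiff_sin.comp (contDiff_const.mul contDiff_snd))
  have hden : ContDiff ℝ (⊤ : ℕ∞) (fun p : ℝ × ℝ => 1 - mm p.1 * Real.cos (2 * p.2)) :=
    contDiff_const.sub ((contDiff_mm.comp contDiff_fst).mul
      (Real.contDiff_cos.comp (contDiff_const.mul contDiff_snd)))
  have hq : ContDiff ℝ (⊤ : ℕ∞)
      (fun p : ℝ × ℝ => mm p.1 * Real.sin (2 * p.2) / (1 - mm p.1 * Real.cos (2 * p.2))) :=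
    hnum.div hden fun p => (N_pos p.1 p.2).ne'
  exact ((contDiff_rr.comp contDiff_fst).mul (contDiff_KK.comp contDiff_fst)).mul
    (Real.contDiff_arctan.comp hq)

lemma contDiff_G2 : ContDiff ℝ (⊤ : ℕ∞) (Function.uncurry G2) := by
  have hP : ContDiff ℝ (⊤ : ℕ∞) (fun p : ℝ × ℝ => 1 - 2 * cc p.1 * Real.cos p.2 + mm p.1) :=
    (contDiff_const.sub ((contDiff_const.mul (contDiff_cc.comp contDiff_fst)).mul
      (Real.contDiff_cos.comp contDiff_snd))).add (contDiff_mm.comp contDiff_fst)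
  have hQ : ContDiff ℝ (⊤ : ℕ∞) (fun p : ℝ × ℝ => 1 + 2 * cc p.1 * Real.cos p.2 + mm p.1) :=
    (contDiff_const.add ((contDiff_const.mul (contDiff_cc.comp contDiff_fst)).mul
      (Real.contDiff_cos.comp contDiff_snd))).add (contDiff_mm.comp contDiff_fst)
  have hlogP : ContDiff ℝ (⊤ : ℕ∞) (fun p : ℝ × ℝ => Real.log (1 - 2 * cc p.1 * Real.cos p.2 + mm p.1)) := by
    rw [contDiff_iff_contDiffAt]
    intro p
    exact (Real.contDiffAt_log.2 (P_pos p.1 p.2).ne').comp p hP.contDiffAt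
  have hlogQ : ContDiff ℝ (⊤ : ℕ∞) (fun p : ℝ × ℝ => Real.log (1 + 2 * cc p.1 * Real.cos p.2 + mm p.1)) := by
    rw [contDiff_iff_contDiffAt]
    intro p
    exact (Real.contDiffAt_log.2 (Q_pos p.1 p.2).ne').comp p hQ.contDiffAt
  exact (((contDiff_rr.comp contDiff_fst).mul (contDiff_KK.comp contDiff_fst)).div_const 2).mul
    (hlogP.sub hlogQ)


/-- `∂_t G1`. -/
lemma hasDerivAt_G1 (s t : ℝ) :
    HasDerivAt (fun t' => G1 s t')
      (rr s * KK s *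
        (2 * mm s * (Real.cos (2 * t) - mm s) /
          (1 - 2 * mm s * Real.cos (2 * t) + mm s ^ 2))) t := by
  have h2 : HasDerivAt (fun t' : ℝ => 2 * t') 2 t := by
    simpa using (hasDerivAt_id t).const_mul (2:ℝ)
  have hsin : HasDerivAt (fun t' => Real.sin (2 * t')) (Real.cos (2 * t) * 2) t :=
    (Real.hasDerivAt_sin (2 * t)).comp t h2
  have hcos : HasDerivAt (fun t' => Real.cos (2 * t')) (-Real.sin (2 * t) * 2) t :=
    (Real.hasDerivAt_cos (2 * t)).comp t h2
  have hnum : HasDerivAt (fun t' => mm s * Real.sin (2 * t')) (mm s * (Real.cos (2 * t) * 2)) t :=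
    hsin.const_mul (mm s)
  have hden : HasDerivAt (fun t' => 1 - mm s * Real.cos (2 * t'))
      (-(mm s * (-Real.sin (2 * t) * 2))) t := (hcos.const_mul (mm s)).const_sub 1
  have hq := hnum.div hden (N_pos s t).ne'
  have harctan := (Real.hasDerivAt_arctan
    (mm s * Real.sin (2 * t) / (1 - mm s * Real.cos (2 * t)))).comp t hq
  have h := harctan.const_mul (rr s * KK s)
  refine h.congr_deriv ?_; symm
  have hN := (N_pos s t).ne'
  have hE := (E_pos s t).ne'
  have htrig : Real.sin (2 * t) ^ 2 = 1 - Real.cos (2 * t) ^ 2 := by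
    nlinarith [Real.sin_sq_add_cos_sq (2 * t)]
  have h1x : (0:ℝ) < 1 + (mm s * Real.sin (2 * t) / (1 - mm s * Real.cos (2 * t))) ^ 2 := by
    positivity
  field_simp
  linear_combination (rr s * KK s * 2 * mm s * (1 - mm s * Real.cos (2*t))^2 *
    ((mm s)^2 * (Real.cos (2*t) - mm s) +
      mm s * (1 - 2*mm s*Real.cos (2*t) + (mm s)^2)) -
    rr s * KK s * mm s ^ 2 * (1 - 5 * mm s * Real.cos (2*t) + 6 * mm s ^ 2 * Real.cos (2*t) ^ 2
      - 2 * mm s ^ 3 * Real.cos (2*t) ^ 3)) * htrig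

/-- `∂_t G2`. -/
lemma hasDerivAt_G2 (s t : ℝ) :
    HasDerivAt (fun t' => G2 s t')
      (rr s * KK s *
        (cc s * Real.sin t * (2 * (1 + mm s)) /
          ((1 - 2 * cc s * Real.cos t + mm s) * (1 + 2 * cc s * Real.cos t + mm s)))) t := by
  have hcos := Real.hasDerivAt_cos t
  have hP : HasDerivAt (fun t' => 1 - 2 * cc s * Real.cos t' + mm s)
      (-(2 * cc s * -Real.sin t)) t :=
    ((hcos.const_mul (2 * cc s)).const_sub 1).add_const (mm s)
  have hQ : HasDerivAt (fun t' => 1 + 2 * cc s * Real.cos t' + mm s)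
      (2 * cc s * -Real.sin t) t :=
    ((hcos.const_mul (2 * cc s)).const_add 1).add_const (mm s)
  have hlogP := (Real.hasDerivAt_log (P_pos s t).ne').comp t hP
  have hlogQ := (Real.hasDerivAt_log (Q_pos s t).ne').comp t hQ
  have h := (hlogP.sub hlogQ).const_mul (rr s * KK s / 2)
  refine h.congr_deriv ?_; symm
  have hPne := (P_pos s t).ne'
  have hQne := (Q_pos s t).ne'
  rw [← mul_div_assoc, div_eq_iff (mul_ne_zero hPne hQne)]
  have e1 := inv_mul_cancel₀ hPne
  have e2 := inv_mul_cancel₀ hQne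
  linear_combination (-(rr s * KK s * cc s * Real.sin t) * (1 + 2 * cc s * Real.cos t + mm s)) * e1 +
    (-(rr s * KK s * cc s * Real.sin t) * (1 - 2 * cc s * Real.cos t + mm s)) * e2

lemma deriv_Gam (s t : ℝ) :
    deriv (Gam s) t =
      (rr s * KK s *
        (2 * mm s * (Real.cos (2 * t) - mm s) /
          (1 - 2 * mm s * Real.cos (2 * t) + mm s ^ 2)),
       rr s * KK s *
        (cc s * Real.sin t * (2 * (1 + mm s)) /
          ((1 - 2 * cc s * Real.cos t + mm s) * (1 + 2 * cc s * Real.cos t + mm s)))) :=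
  ((hasDerivAt_G1 s t).prodMk (hasDerivAt_G2 s t)).deriv

/-- the circle identity. -/
lemma circle_identity (s t : ℝ) :
    ((deriv (Gam s) t).1 + 1) ^ 2 + ((deriv (Gam s) t).2) ^ 2 = 1 + s ^ 2 := by
  rw [deriv_Gam]
  simp only
  have hm := cc_sq s
  have hv2 : Real.sin t ^ 2 = 1 - Real.cos t ^ 2 := by
    nlinarith [Real.sin_sq_add_cos_sq t]
  have hPQ : (1 - 2 * cc s * Real.cos t + mm s) * (1 + 2 * cc s * Real.cos t + mm s)
      = (1 + mm s) ^ 2 - 4 * mm s * Real.cos t ^ 2 := by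
    linear_combination (-4 * Real.cos t ^ 2) * hm
  have hDne : (1 + mm s) ^ 2 - 4 * mm s * Real.cos t ^ 2 ≠ 0 := by
    rw [← hPQ]; exact (mul_pos (P_pos s t) (Q_pos s t)).ne'
  have hbsq : (rr s * KK s * (cc s * Real.sin t * (2 * (1 + mm s)) /
        ((1 - 2 * cc s * Real.cos t + mm s) * (1 + 2 * cc s * Real.cos t + mm s)))) ^ 2
      = (rr s * KK s) ^ 2 * (mm s * (1 - Real.cos t ^ 2) * (2 * (1 + mm s)) ^ 2) /
        ((1 + mm s) ^ 2 - 4 * mm s * Real.cos t ^ 2) ^ 2 := by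
    rw [hPQ]
    rw [mul_pow, div_pow, mul_div_assoc]
    congr 2
    linear_combination ((2 * (1 + mm s)) ^ 2 * Real.sin t ^ 2) * hm +
      ((2 * (1 + mm s)) ^ 2 * mm s) * hv2
  rw [hbsq]
  have hr2 := rr_sq s
  have hk := KK_mul s
  have hr := key_rel s
  have h1m := (one_add_mm_pos s).ne'
  have h3m := (one_sub_three_mm_pos s).ne'
  have hK : KK s = 2 * (1 - mm s) / (1 + mm s) := by
    rw [eq_div_iff h1m]; exact hk
  have hrr : rr s = (1 + mm s) / (1 - 3 * mm s) := by
    rw [eq_div_iff h3m]; exact hr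
  rw [← hr2, Real.cos_two_mul t, hK, hrr]
  have hEne : 1 - 2 * mm s * (2 * Real.cos t ^ 2 - 1) + mm s ^ 2 ≠ 0 := by
    rw [← Real.cos_two_mul t]; exact (E_pos s t).ne'
  have hED : 1 - 2 * mm s * (2 * Real.cos t ^ 2 - 1) + mm s ^ 2
      = (1 + mm s) ^ 2 - 4 * mm s * Real.cos t ^ 2 := by ring
  rw [hED]
  have h3m' : 1 - mm s * 3 ≠ 0 := by rwa [mul_comm]
  have hD' : (1 + mm s) ^ 2 - mm s * Real.cos t ^ 2 * 4 ≠ 0 := by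
    convert hDne using 2; ring
  field_simp
  ring

variable {E : Type*} [NormedAddCommGroup E] [NormedSpace ℝ E]

lemma contDiff_deriv_snd {f : ℝ → ℝ → E} (hf : ContDiff ℝ (⊤ : ℕ∞) (Function.uncurry f)) :
    ContDiff ℝ (⊤ : ℕ∞) (fun p : ℝ × ℝ => deriv (f p.1) p.2) := by
  have h1 : ContDiff ℝ (⊤ : ℕ∞) (Function.uncurry (fun (p : ℝ × ℝ) (t : ℝ) => f p.1 t)) :=
    hf.comp ((contDiff_fst.comp contDiff_fst).prodMk contDiff_snd)
  have h2 : ContDiff ℝ (⊤ : ℕ∞) (fun p : ℝ × ℝ => fderiv ℝ (f p.1) p.2 1) :=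
    ContDiff.fderiv_apply h1 contDiff_snd contDiff_const (by simp)
  simpa only [fderiv_apply_one_eq_deriv] using h2

lemma contDiff_iteratedDeriv_snd {f : ℝ → ℝ → E} (hf : ContDiff ℝ (⊤ : ℕ∞) (Function.uncurry f))
    (k : ℕ) : ContDiff ℝ (⊤ : ℕ∞) (fun p : ℝ × ℝ => iteratedDeriv k (f p.1) p.2) := by
  induction k with
  | zero => simp only [iteratedDeriv_zero]; exact hf
  | succ k ih =>
      have h := contDiff_deriv_snd (f := fun s => iteratedDeriv k (f s)) ih
      simp_rw [iteratedDeriv_succ]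
      exact h

lemma contDiff_deriv_fst {f : ℝ → ℝ → E} (hf : ContDiff ℝ (⊤ : ℕ∞) (Function.uncurry f)) :
    ContDiff ℝ (⊤ : ℕ∞) (fun p : ℝ × ℝ => deriv (fun s => f s p.2) p.1) := by
  have hswap : ContDiff ℝ (⊤ : ℕ∞) (Function.uncurry (fun t s => f s t)) :=
    hf.comp (contDiff_snd.prodMk contDiff_fst)
  exact (contDiff_deriv_snd hswap).comp (contDiff_snd.prodMk contDiff_fst)

lemma bound_lemma {F : ℝ → ℝ → E} (hF : ContDiff ℝ (⊤ : ℕ∞) (Function.uncurry F))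
    (hper : ∀ s t, F s (t + 2 * π) = F s t) (h0 : ∀ t, F 0 t = 0) :
    ∃ C : ℝ, ∀ s ∈ Icc (0:ℝ) 1, ∀ t, ‖F s t‖ ≤ C * s := by
  set G : ℝ × ℝ → E := fun p => deriv (fun s => F s p.2) p.1 with hGdef
  have hG : Continuous G := (contDiff_deriv_fst hF).continuous
  obtain ⟨C, hC⟩ :=
    (((isCompact_Icc (a := (0:ℝ)) (b := 1)).prod
      (isCompact_Icc (a := (0:ℝ)) (b := 2*π)))).exists_bound_of_continuousOn hG.continuousOn
  have hCnn : ∀ p : ℝ × ℝ, p.1 ∈ Icc (0:ℝ) 1 → ‖G p‖ ≤ max C 0 := by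
    intro p hp
    have hper' : Function.Periodic (fun t => G (p.1, t)) (2*π) := by
      intro t
      have h2 : (fun s => F s (t + 2*π)) = (fun s => F s t) := funext fun s => hper s t
      show deriv (fun s => F s (t + 2*π)) p.1 = deriv (fun s => F s t) p.1
      rw [h2]
    obtain ⟨y, hy, hxy⟩ := hper'.exists_mem_Ico₀ (by positivity : (0:ℝ) < 2*π) p.2
    have : G p = G (p.1, y) := hxy
    rw [this]
    exact le_max_of_le_left (hC (p.1, y) ⟨hp, ⟨hy.1, hy.2.le⟩⟩)
  refine ⟨max C 0, ?_⟩
  intro s hs t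
  have hdiff : ∀ x ∈ Icc (0:ℝ) s, HasDerivWithinAt (fun s' => F s' t) (G (x, t)) (Icc 0 s) x := by
    intro x hx
    have hdx : DifferentiableAt ℝ (fun s' => F s' t) x :=
      ((hF.differentiable (by simp)).comp
        ((differentiable_id).prodMk (differentiable_const t))).differentiableAt
    exact hdx.hasDerivAt.hasDerivWithinAt
  have hbound : ∀ x ∈ Ico (0:ℝ) s, ‖G (x, t)‖ ≤ max C 0 := fun x hx =>
    hCnn (x, t) ⟨hx.1, le_trans hx.2.le hs.2⟩
  have hm := norm_image_sub_le_of_norm_deriv_le_segment' hdiff hbound s (right_mem_Icc.2 hs.1)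
  simpa [h0 t] using hm

lemma deriv_even_zero {f : ℝ → ℝ} (h : ∀ x, f (-x) = f x) : deriv f 0 = 0 := by
  have h1 := deriv_comp_neg (f := f) (x := (0:ℝ))
  have h2 : (fun x => f (-x)) = f := funext h
  rw [h2, neg_zero] at h1
  linarith

lemma iteratedDeriv_zero_fun {k : ℕ} : iteratedDeriv k (fun _ : ℝ => (0:E)) = fun _ => 0 := by
  induction k with
  | zero => simp [iteratedDeriv_zero]
  | succ k ih => rw [iteratedDeriv_succ, ih]; funext x; simp

lemma periodic_iteratedDeriv {f : ℝ → E} (h : ∀ t, f (t + 2*π) = f t) (k : ℕ) :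
    ∀ t, iteratedDeriv k f (t + 2*π) = iteratedDeriv k f t := by
  induction k with
  | zero => simpa using h
  | succ k ih =>
      intro t
      rw [iteratedDeriv_succ]
      have h2 : (fun x => iteratedDeriv k f (x + 2*π)) = iteratedDeriv k f := funext ih
      calc deriv (iteratedDeriv k f) (t + 2*π)
          = deriv (fun x => iteratedDeriv k f (x + 2*π)) t := (deriv_comp_add_const _ _ _).symm
        _ = deriv (iteratedDeriv k f) t := by rw [h2]


lemma G1_per (s t : ℝ) : G1 s (t + 2 * π) = G1 s t := by
  unfold G1
  rw [show (2:ℝ) * (t + 2 * π) = 2 * t + 2 * π + 2 * π by ring,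
    Real.sin_add_two_pi, Real.sin_add_two_pi, Real.cos_add_two_pi, Real.cos_add_two_pi]

lemma G2_per (s t : ℝ) : G2 s (t + 2 * π) = G2 s t := by
  unfold G2
  rw [Real.cos_add_two_pi]

lemma Gam_per (s : ℝ) : ∀ t, Gam s (t + 2 * π) = Gam s t := fun t => by
  simp [Gam, G1_per, G2_per]

lemma rr_zero : rr 0 = 1 := by simp [rr]
lemma mm_zero : mm 0 = 0 := by simp [mm]
lemma cc_zero : cc 0 = 0 := by simp [cc]
lemma G1_zero (t : ℝ) : G1 0 t = 0 := by simp [G1, mm_zero]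
lemma G2_zero (t : ℝ) : G2 0 t = 0 := by simp [G2, mm_zero, cc_zero]
lemma Gam_zero : Gam 0 = fun _ => (0 : ℝ × ℝ) := funext fun t => by
  simp [Gam, G1_zero, G2_zero, Prod.ext_iff]

lemma rr_neg (s : ℝ) : rr (-s) = rr s := by simp [rr]
lemma mm_neg (s : ℝ) : mm (-s) = mm s := by simp [mm, dd, rr_neg]
lemma G1_neg (s : ℝ) : G1 (-s) = G1 s := by
  funext t
  simp [G1, KK, mm_neg, rr_neg]


lemma contDiff_Gam : ContDiff ℝ (⊤ : ℕ∞) (Function.uncurry Gam) :=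
  contDiff_G1.prodMk contDiff_G2

end Corrugation

open Corrugation

/-- **The corrugation function** (Lemma 3 of Conti–De Lellis–Székelyhidi).
There are `δ* > 0` and a smooth function `Γ = Γ(s,t) : [0,δ*] × ℝ → ℝ²`,
`2π`-periodic in `t`, with `|∂_t Γ(s,t) + e₁|² = 1 + s²` and, for every `k`,
`|∂_s ∂_t^k Γ₁(s,t)| + |∂_t^k Γ(s,t)| ≤ C_k s`.  (Smoothness on the strip is
expressed by `Γ` being the restriction of a globally smooth function.) -/
theorem corrugation_exists :
    ∃ δstar > (0 : ℝ), ∃ Γ : ℝ → ℝ → ℝ × ℝ,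
      ContDiff ℝ (⊤ : ℕ∞) (Function.uncurry Γ) ∧
      (∀ s ∈ Icc (0 : ℝ) δstar, ∀ t : ℝ, Γ s (t + 2 * π) = Γ s t) ∧
      (∀ s ∈ Icc (0 : ℝ) δstar, ∀ t : ℝ,
        ((deriv (Γ s) t).1 + 1) ^ 2 + ((deriv (Γ s) t).2) ^ 2 = 1 + s ^ 2) ∧
      (∀ k : ℕ, ∃ C : ℝ, ∀ s ∈ Icc (0 : ℝ) δstar, ∀ t : ℝ,
        |deriv (fun s' => iteratedDeriv k (fun t' => (Γ s' t').1) t) s| +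
          Real.sqrt (((iteratedDeriv k (Γ s) t).1) ^ 2 +
            ((iteratedDeriv k (Γ s) t).2) ^ 2) ≤ C * s) := by
  refine ⟨1, one_pos, Gam, contDiff_Gam, fun s _ t => Gam_per s t,
    fun s _ t => circle_identity s t, ?_⟩
  intro k
  -- bound on the iterated t-derivatives of Γ
  obtain ⟨C1, hC1⟩ := bound_lemma (F := fun s t => iteratedDeriv k (Gam s) t)
    (contDiff_iteratedDeriv_snd contDiff_Gam k)
    (fun s t => periodic_iteratedDeriv (Gam_per s) k t)
    (fun t => by
      show iteratedDeriv k (Gam 0) t = 0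
      rw [Gam_zero, iteratedDeriv_zero_fun])
  -- bound on the mixed derivative of Γ₁
  obtain ⟨C2, hC2⟩ := bound_lemma
    (F := fun s t => deriv (fun s' => iteratedDeriv k (G1 s') t) s)
    (contDiff_deriv_fst (contDiff_iteratedDeriv_snd contDiff_G1 k))
    (fun s t => by
      have h2 : (fun s' => iteratedDeriv k (G1 s') (t + 2*π))
          = (fun s' => iteratedDeriv k (G1 s') t) :=
        funext fun s' => periodic_iteratedDeriv (G1_per s') k t
      show deriv (fun s' => iteratedDeriv k (G1 s') (t + 2*π)) s
        = deriv (fun s' => iteratedDeriv k (G1 s') t) s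
      rw [h2])
    (fun t => deriv_even_zero (fun x => by rw [G1_neg]))
  refine ⟨C2 + Real.sqrt 2 * C1, ?_⟩
  intro s hs t
  have e1 : ‖iteratedDeriv k (Gam s) t‖ ≤ C1 * s := hC1 s hs t
  have e2 : |deriv (fun s' => iteratedDeriv k (G1 s') t) s| ≤ C2 * s := by
    rw [← Real.norm_eq_abs]; exact hC2 s hs t
  have hfst : |(iteratedDeriv k (Gam s) t).1| ≤ ‖iteratedDeriv k (Gam s) t‖ := by
    rw [← Real.norm_eq_abs]; exact norm_fst_le _
  have hsnd : |(iteratedDeriv k (Gam s) t).2| ≤ ‖iteratedDeriv k (Gam s) t‖ := by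
    rw [← Real.norm_eq_abs]; exact norm_snd_le _
  have hsqrt : Real.sqrt (((iteratedDeriv k (Gam s) t).1) ^ 2 +
      ((iteratedDeriv k (Gam s) t).2) ^ 2) ≤ Real.sqrt 2 * ‖iteratedDeriv k (Gam s) t‖ := by
    rw [show Real.sqrt 2 * ‖iteratedDeriv k (Gam s) t‖
        = Real.sqrt (2 * ‖iteratedDeriv k (Gam s) t‖ ^ 2) by
      rw [Real.sqrt_mul (by norm_num), Real.sqrt_sq (norm_nonneg _)]]
    apply Real.sqrt_le_sqrt
    nlinarith [sq_abs ((iteratedDeriv k (Gam s) t).1), sq_abs ((iteratedDeriv k (Gam s) t).2),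
      abs_nonneg ((iteratedDeriv k (Gam s) t).1), abs_nonneg ((iteratedDeriv k (Gam s) t).2),
      norm_nonneg (iteratedDeriv k (Gam s) t), hfst, hsnd]
  have hgoal1 : deriv (fun s' => iteratedDeriv k (fun t' => (Gam s' t').1) t) s
      = deriv (fun s' => iteratedDeriv k (G1 s') t) s := rfl
  rw [hgoal1]
  have h3 : Real.sqrt 2 * ‖iteratedDeriv k (Gam s) t‖ ≤ Real.sqrt 2 * (C1 * s) :=
    mul_le_mul_of_nonneg_left e1 (Real.sqrt_nonneg 2)
  calc |deriv (fun s' => iteratedDeriv k (G1 s') t) s| +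
        Real.sqrt (((iteratedDeriv k (Gam s) t).1) ^ 2 + ((iteratedDeriv k (Gam s) t).2) ^ 2)
      ≤ C2 * s + Real.sqrt 2 * (C1 * s) := add_le_add e2 (le_trans hsqrt h3)
    _ = (C2 + Real.sqrt 2 * C1) * s := by ring
end
end

section
/- Let n ≥ 1 and n* = n(n+1)/2, and let g₀ be a symmetric positive definite n×n matrix. Then there exist r > 0, unit vectors ν₁, …, ν_{n*} ∈ S^{n−1}, and linear maps L₁, …, L_{n*} from the space of symmetric n×n matrices to ℝ, such that g = Σ_{k=1}^{n*} L_k(g) ν_k ⊗ ν_k for every symmetric n×n matrix g, and such that L_k(g) ≥ r for every k and every symmetric positive definite g with |g − g₀| ≤ r. -/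
/-!
Index the primitive metrics by `Sym2 (Fin n)`: the vectors `1_z` (`e_i` for `s(i, i)`,
`e_i + e_j` for `s(i, j)`) give `n(n+1)/2` rank-one matrices `1_z ⊗ 1_z` which span the
symmetric matrices, with explicit linear coefficients `c_z`. Their sum `M` is positive definite and
has all coefficients `c_z M = 1`. Writing `g₀ = P M Pᵀ` with `P` invertible and transporting the
decomposition by `g ↦ P g Pᵀ` gives vectors `P 1_z` and coefficients `g ↦ c_z (P⁻¹ g P⁻ᵀ)`,
which equal `1` at `g₀`. Normalising the vectors rescales the coefficients by `‖P 1_z‖² > 0`, and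
coefficients that are positive at `g₀` stay bounded below near `g₀` by continuity.
-/

open Set

noncomputable section

open Matrix Filter Topology

theorem exists_pos_forall_le_of_continuousAt {ι X : Type*} [Finite ι] [PseudoMetricSpace X]
    {f : ι → X → ℝ} {x₀ : X} (hf : ∀ k, ContinuousAt (f k) x₀) (hpos : ∀ k, 0 < f k x₀) :
    ∃ r > 0, ∀ k, ∀ x, dist x x₀ ≤ r → r ≤ f k x := by
  -- Working at `(x₀, 0)` in `X × ℝ` chooses the radius and the lower bound at once.
  have hev : ∀ᶠ p : X × ℝ in 𝓝 (x₀, 0), ∀ k, p.2 < f k p.1 :=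
    eventually_all.2 fun k => continuousAt_snd.eventually_lt
      ((hf k).comp continuousAt_fst) (hpos k)
  obtain ⟨ε, hε, hball⟩ := Metric.eventually_nhds_iff.1 hev
  refine ⟨ε / 2, by positivity, fun k x hx => (hball (y := (x, ε / 2)) ?_ k).le⟩
  rw [Prod.dist_eq, Real.dist_0_eq_abs, abs_of_pos (half_pos hε)]
  exact max_lt (hx.trans_lt (half_lt_self hε)) (half_lt_self hε)

section EntrywiseNorm

attribute [local instance] Matrix.normedAddCommGroup Matrix.normedSpace

theorem Matrix.exists_pos_forall_le_of_entrywise {ι m n : Type*} [Finite ι] [Fintype m]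
    [Fintype n] {L : ι → Matrix m n ℝ →ₗ[ℝ] ℝ} {g₀ : Matrix m n ℝ} (hpos : ∀ k, 0 < L k g₀) :
    ∃ r > 0, ∀ k, ∀ g : Matrix m n ℝ, (∀ i j, |g i j - g₀ i j| ≤ r) → r ≤ L k g := by
  obtain ⟨r, hr, hle⟩ := exists_pos_forall_le_of_continuousAt
    (fun k => (L k).continuous_of_finiteDimensional.continuousAt) hpos
  refine ⟨r, hr, fun k g hg => hle k g ?_⟩
  rw [dist_eq_norm, Matrix.norm_le_iff hr.le]
  simpa using hg

end EntrywiseNorm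

open scoped MatrixOrder ComplexOrder in
theorem Matrix.PosDef.exists_isUnit_eq_conjTranspose_mul_self {n 𝕜 : Type*} [Fintype n]
    [DecidableEq n] [RCLike 𝕜] {A : Matrix n n 𝕜} (hA : A.PosDef) :
    ∃ X, IsUnit X ∧ A = Xᴴ * X := by
  obtain ⟨X, rfl⟩ := CStarAlgebra.nonneg_iff_eq_star_mul_self.mp hA.posSemidef.nonneg
  refine ⟨X, ?_, rfl⟩
  have hunit := hA.isUnit
  rw [isUnit_iff_isUnit_det, det_mul] at hunit
  exact (isUnit_iff_isUnit_det X).2 <| isUnit_of_mul_isUnit_right hunit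

open scoped ComplexOrder in
theorem Matrix.PosDef.exists_isUnit_eq_mul_mul_conjTranspose {n 𝕜 : Type*} [Fintype n]
    [DecidableEq n] [RCLike 𝕜] {A B : Matrix n n 𝕜} (hA : A.PosDef) (hB : B.PosDef) :
    ∃ P, IsUnit P ∧ A = P * B * Pᴴ := by
  obtain ⟨X, hX, rfl⟩ := hA.exists_isUnit_eq_conjTranspose_mul_self
  obtain ⟨Y, hY, rfl⟩ := hB.exists_isUnit_eq_conjTranspose_mul_self
  have hYdet : IsUnit Y.det := (isUnit_iff_isUnit_det Y).1 hY
  refine ⟨Xᴴ * Y⁻¹ᴴ, hX.star.mul (isUnit_nonsing_inv_iff.2 hY).star, ?_⟩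
  simp only [conjTranspose_mul, conjTranspose_conjTranspose, Matrix.mul_assoc,
    mul_nonsing_inv_cancel_left _ _ hYdet]
  rw [← Matrix.mul_assoc Y⁻¹ᴴ, ← conjTranspose_mul, mul_nonsing_inv _ hYdet, conjTranspose_one,
    Matrix.one_mul]

theorem Matrix.mul_vecMulVec_mul_transpose {m n R : Type*} [Fintype n] [CommSemiring R]
    (P : Matrix m n R) (u : n → R) : P * vecMulVec u u * Pᵀ = vecMulVec (P *ᵥ u) (P *ᵥ u) := by
  rw [mul_vecMulVec, vecMulVec_mul, vecMul_transpose]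

theorem EuclideanSpace.smul_vecMulVec_eq_normalize {ι : Type*} [Fintype ι]
    {w : EuclideanSpace ℝ ι} (hw : w ≠ 0) (c : ℝ) :
    c • vecMulVec w w = (‖w‖ ^ 2 * c) • Matrix.of fun i j => (‖w‖⁻¹ • w) i * (‖w‖⁻¹ • w) j := by
  have hw' : ‖w‖ ≠ 0 := norm_ne_zero_iff.2 hw
  ext i j
  simp only [Matrix.smul_apply, vecMulVec_apply, Matrix.of_apply, PiLp.smul_apply, smul_eq_mul]
  field_simp

theorem Sym2.card_fin (n : ℕ) : Fintype.card (Sym2 (Fin n)) = n * (n + 1) / 2 := by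
  rw [Sym2.card, Fintype.card_fin, Nat.choose_two_right, Nat.add_sub_cancel, Nat.mul_comm]

theorem Sym2.sum_ite_mem {α M : Type*} [Fintype α] [DecidableEq α] [AddCommMonoid M]
    (a : α) (f : Sym2 α → M) :
    ∑ z, (if a ∈ z then f z else 0) = ∑ x, f s(a, x) := by
  have hfilter : Finset.univ.filter (a ∈ ·) = Finset.univ.map (Sym2.mkEmbedding a) := by
    ext z
    simp only [Finset.mem_filter, Finset.mem_univ, true_and, Finset.mem_map,
      Sym2.mkEmbedding_apply]
    exact ⟨fun h => ⟨_, Sym2.other_spec h⟩, fun ⟨x, hx⟩ => hx ▸ Sym2.mem_mk_left a x⟩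
  rw [← Finset.sum_filter, hfilter, Finset.sum_map]
  rfl

theorem Sym2.sum_ite_mem_and_mem {α M : Type*} [Fintype α] [DecidableEq α] [AddCommMonoid M]
    (a b : α) (f : Sym2 α → M) :
    ∑ z, (if a ∈ z ∧ b ∈ z then f z else 0) = if a = b then ∑ x, f s(a, x) else f s(a, b) := by
  split_ifs with hab
  · subst hab
    simpa using Sym2.sum_ite_mem a f
  · simp_rw [Sym2.mem_and_mem_iff hab]
    simp

section PrimitiveMetrics

variable {ι : Type*} [DecidableEq ι]

def primitiveVec (z : Sym2 ι) : ι → ℝ := fun k => if k ∈ z then 1 else 0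

theorem primitiveVec_ne_zero (z : Sym2 ι) : primitiveVec z ≠ 0 := by
  induction z with
  | h a b => exact Function.ne_iff.2 ⟨a, by simp [primitiveVec]⟩

theorem primitiveVec_diag (i : ι) : primitiveVec s(i, i) = Pi.single i 1 := by
  ext k
  simp [primitiveVec, Pi.single_apply]

theorem vecMulVec_primitiveVec_apply (z : Sym2 ι) (a b : ι) :
    vecMulVec (primitiveVec z) (primitiveVec z) a b = if a ∈ z ∧ b ∈ z then 1 else 0 := by
  simp only [vecMulVec_apply, primitiveVec]
  split_ifs <;> simp_all

variable [Fintype ι]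

/-- Off the diagonal `c_{s(i,j)}` reads the symmetric part of `h`; the diagonal coefficient is
corrected so that the `n` coefficients `c_{s(i,x)}` sum to `h i i`. -/
def primitiveCoeff (z : Sym2 ι) : Matrix ι ι ℝ →ₗ[ℝ] ℝ :=
  Sym2.lift ⟨fun i j => (2 : ℝ)⁻¹ • (entryLinearMap ℝ ℝ i j + entryLinearMap ℝ ℝ j i) +
      if i = j then entryLinearMap ℝ ℝ i i - ∑ k, entryLinearMap ℝ ℝ i k else 0, by
    intro i j
    by_cases hij : i = j
    · subst hij; rfl
    · simp [hij, Ne.symm hij, add_comm]⟩ z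

theorem primitiveCoeff_mk (i j : ι) (h : Matrix ι ι ℝ) :
    primitiveCoeff s(i, j) h =
      (h i j + h j i) / 2 + if i = j then h i i - ∑ k, h i k else 0 := by
  split_ifs <;> simp [primitiveCoeff, *] <;> ring

theorem primitiveCoeff_mk_of_isSymm {h : Matrix ι ι ℝ} (hh : h.IsSymm) (i j : ι) :
    primitiveCoeff s(i, j) h = h i j + if i = j then h i i - ∑ k, h i k else 0 := by
  rw [primitiveCoeff_mk, hh.apply i j]
  ring

theorem sum_smul_vecMulVec_primitiveVec_apply (c : Sym2 ι → ℝ) (a b : ι) :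
    (∑ z, c z • vecMulVec (primitiveVec z) (primitiveVec z)) a b =
      if a = b then ∑ x, c s(a, x) else c s(a, b) := by
  simp only [Matrix.sum_apply, Matrix.smul_apply, vecMulVec_primitiveVec_apply, smul_eq_mul,
    mul_ite, mul_one, mul_zero, Sym2.sum_ite_mem_and_mem]

theorem sum_primitiveCoeff_smul_vecMulVec {h : Matrix ι ι ℝ} (hh : h.IsSymm) :
    ∑ z, primitiveCoeff z h • vecMulVec (primitiveVec z) (primitiveVec z) = h := by
  ext a b
  rw [sum_smul_vecMulVec_primitiveVec_apply]
  split_ifs with hab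
  · subst hab
    simp [primitiveCoeff_mk_of_isSymm hh, Finset.sum_add_distrib]
  · simp [primitiveCoeff_mk_of_isSymm hh, hab]

variable (ι) in
def sumPrimitiveMetrics : Matrix ι ι ℝ := ∑ z, vecMulVec (primitiveVec z) (primitiveVec z)

theorem sumPrimitiveMetrics_apply (a b : ι) :
    sumPrimitiveMetrics ι a b = if a = b then (Fintype.card ι : ℝ) else 1 := by
  simpa [sumPrimitiveMetrics] using sum_smul_vecMulVec_primitiveVec_apply (fun _ => (1 : ℝ)) a b

theorem sum_sumPrimitiveMetrics_row (i : ι) :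
    ∑ k, sumPrimitiveMetrics ι i k = 2 * Fintype.card ι - 1 := by
  rw [Fintype.sum_eq_add_sum_compl i, Finset.sum_congr rfl fun k hk =>
    (sumPrimitiveMetrics_apply i k).trans (if_neg (by simpa [eq_comm] using hk))]
  simp [Finset.card_compl, sumPrimitiveMetrics_apply, Nat.cast_sub (Fintype.card_pos_iff.2 ⟨i⟩)]
  ring

theorem primitiveCoeff_sumPrimitiveMetrics (z : Sym2 ι) :
    primitiveCoeff z (sumPrimitiveMetrics ι) = 1 := by
  induction z with
  | h i j =>
    by_cases hij : i = j
    · subst hij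
      rw [primitiveCoeff_mk, sum_sumPrimitiveMetrics_row, sumPrimitiveMetrics_apply, if_pos rfl,
        if_pos rfl]
      ring
    · simp [primitiveCoeff_mk, sumPrimitiveMetrics_apply, hij, Ne.symm hij]

theorem sumPrimitiveMetrics_posDef : (sumPrimitiveMetrics ι).PosDef := by
  refine .of_dotProduct_mulVec_pos ?_ fun x hx => ?_
  · exact (posSemidef_sum Finset.univ fun z _ => by
      simpa using posSemidef_vecMulVec_self_star (primitiveVec z)).isHermitian
  · have hquad : star x ⬝ᵥ sumPrimitiveMetrics ι *ᵥ x = ∑ z, (primitiveVec z ⬝ᵥ x) ^ 2 := by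
      simp [sumPrimitiveMetrics, Matrix.sum_mulVec, vecMulVec_mulVec, sum_dotProduct,
        dotProduct_comm x, sq]
    obtain ⟨i, hi⟩ := Function.ne_iff.mp hx
    rw [hquad]
    refine Finset.sum_pos' (fun z _ => sq_nonneg _) ⟨s(i, i), Finset.mem_univ _, ?_⟩
    rw [primitiveVec_diag, single_one_dotProduct]
    exact sq_pos_of_ne_zero hi

theorem exists_primitive_decomposition {g₀ : Matrix ι ι ℝ} (hg₀ : g₀.PosDef) :
    ∃ (ν : Sym2 ι → EuclideanSpace ℝ ι) (L : Sym2 ι → Matrix ι ι ℝ →ₗ[ℝ] ℝ),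
      (∀ z, ‖ν z‖ = 1) ∧
      (∀ g : Matrix ι ι ℝ, g.IsSymm → g = ∑ z, L z g • Matrix.of fun i j => ν z i * ν z j) ∧
      ∀ z, 0 < L z g₀ := by
  obtain ⟨P, hP, hg₀P⟩ :=
    hg₀.exists_isUnit_eq_mul_mul_conjTranspose (sumPrimitiveMetrics_posDef (ι := ι))
  rw [conjTranspose_eq_transpose_of_trivial] at hg₀P
  have hPdet : IsUnit P.det := (isUnit_iff_isUnit_det P).1 hP
  let w (z : Sym2 ι) : EuclideanSpace ℝ ι := WithLp.toLp 2 (P *ᵥ primitiveVec z)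
  have hw (z : Sym2 ι) : w z ≠ 0 := fun h => primitiveVec_ne_zero z <|
    mulVec_injective_of_isUnit hP <| by simpa [w] using congrArg WithLp.ofLp h
  let C : Matrix ι ι ℝ →ₗ[ℝ] Matrix ι ι ℝ := LinearMap.mulLeft ℝ P⁻¹ ∘ₗ LinearMap.mulRight ℝ P⁻¹ᵀ
  have hC (g : Matrix ι ι ℝ) : P * C g * Pᵀ = g := by
    simp [C, Matrix.mul_assoc, mul_nonsing_inv_cancel_left _ _ hPdet, ← transpose_mul,
      mul_nonsing_inv _ hPdet]
  refine ⟨fun z => ‖w z‖⁻¹ • w z, fun z => ‖w z‖ ^ 2 • (primitiveCoeff z ∘ₗ C),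
    fun z => norm_smul_inv_norm (hw z), fun g hg => ?_, fun z => ?_⟩
  · have hCg : (C g).IsSymm := by
      simp [C, IsSymm, transpose_mul, hg.eq, Matrix.mul_assoc]
    conv_lhs => rw [← hC g, ← sum_primitiveCoeff_smul_vecMulVec hCg]
    simp only [Matrix.mul_sum, Matrix.sum_mul, Matrix.mul_smul, Matrix.smul_mul,
      mul_vecMulVec_mul_transpose]
    refine Finset.sum_congr rfl fun z _ => ?_
    rw [EuclideanSpace.smul_vecMulVec_eq_normalize (hw z)]
    rfl
  · have hCg₀ : C g₀ = sumPrimitiveMetrics ι := by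
      simp [C, hg₀P, Matrix.mul_assoc, nonsing_inv_mul_cancel_left _ _ hPdet, ← transpose_mul,
        nonsing_inv_mul _ hPdet]
    simpa [hCg₀, primitiveCoeff_sumPrimitiveMetrics] using pow_pos (norm_pos_iff.2 (hw z)) 2

end PrimitiveMetrics

theorem decomposition_into_primitive_metrics_general
    (n : ℕ)
    (g₀ : Matrix (Fin n) (Fin n) ℝ) (hg₀ : g₀.PosDef) :
    ∃ r > (0 : ℝ),
      ∃ ν : Fin (n * (n + 1) / 2) → EuclideanSpace ℝ (Fin n),
      ∃ L : Fin (n * (n + 1) / 2) → (Matrix (Fin n) (Fin n) ℝ →ₗ[ℝ] ℝ),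
        (∀ k, ‖ν k‖ = 1) ∧
        (∀ g : Matrix (Fin n) (Fin n) ℝ, g.IsSymm →
          g = ∑ k, L k g • Matrix.of fun i j => ν k i * ν k j) ∧
        (∀ k, ∀ g : Matrix (Fin n) (Fin n) ℝ, g.PosDef →
          (∀ i j, |g i j - g₀ i j| ≤ r) → r ≤ L k g) := by
  obtain ⟨ν, L, hν, hdecomp, hpos⟩ := exists_primitive_decomposition hg₀
  obtain ⟨r, hr, hle⟩ := Matrix.exists_pos_forall_le_of_entrywise hpos
  let e : Fin (n * (n + 1) / 2) ≃ Sym2 (Fin n) := (Fintype.equivFinOfCardEq (Sym2.card_fin n)).symm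
  refine ⟨r, hr, ν ∘ e, L ∘ e, fun k => hν (e k), fun g hg => ?_, fun k g _ hg => hle (e k) g hg⟩
  exact (hdecomp g hg).trans (e.sum_comp fun z => L z g • Matrix.of fun i j => ν z i * ν z j).symm

/-- **Decomposition into primitive metrics** (Lemma 4 of
Conti–De Lellis–Székelyhidi): near any positive definite `g₀` every symmetric
matrix can be written as `Σ_k L_k(g) ν_k ⊗ ν_k`, with coefficients `L_k(g)`
bounded below by `r > 0` on the ball `{|g − g₀| ≤ r}` of positive definite
matrices. -/
theorem decomposition_into_primitive_metrics
    (n : ℕ) (hn : 1 ≤ n)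
    (g₀ : Matrix (Fin n) (Fin n) ℝ) (hg₀ : g₀.PosDef) :
    ∃ r > (0 : ℝ),
      ∃ ν : Fin (n * (n + 1) / 2) → EuclideanSpace ℝ (Fin n),
      ∃ L : Fin (n * (n + 1) / 2) → (Matrix (Fin n) (Fin n) ℝ →ₗ[ℝ] ℝ),
        (∀ k, ‖ν k‖ = 1) ∧
        (∀ g : Matrix (Fin n) (Fin n) ℝ, g.IsSymm →
          g = ∑ k, L k g • Matrix.of fun i j => ν k i * ν k j) ∧
        (∀ k, ∀ g : Matrix (Fin n) (Fin n) ℝ, g.PosDef →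
          (∀ i j, |g i j - g₀ i j| ≤ r) → r ≤ L k g) :=
  decomposition_into_primitive_metrics_general n g₀ hg₀
end
end
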